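/- Let 𝒟 = (V,E) be a DAG with reachability matrix R and let B = (b_{ij})_{d×d} be a nonnegative matrix with sgn(B) = R. Then there exist positive weights c_{ki} > 0 for (k,i) ∈ E and c_{ii} > 0 for i ∈ V such that for every z ∈ [0,∞)^d and every i ∈ V, max_{j∈V} b_{ji} z_j = max( max_{k ∈ pa(i)} c_{ki} · max_{j∈V} b_{jk} z_j , c_{ii} z_i ), if and only if for every i ∈ V: b_{ji} = max_{k ∈ de(j)∩pa(i)} b_{jk} b_{ki} / b_{kk} for all j ∈ an(i)∖pa(i), and b_{ji} ≥ max_{k ∈ de(j)∩pa(i)} b_{jk} b_{ki} / b_{kk} for all j ∈ pa(i) (maximum over the empty set is 0). -/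

import Mathlib

/-!
The map `z ↦ (max_j b j i * z j)_i` is max-times linear, so it solves the recursive equations
with weights `c` for every `z` iff each row `b j` solves them for the unit vector `z = e_j`:
`b j i = max (max_{k ∈ pa(i)} c k i * b j k) (c i i * [j = i])`.
Read at an edge `k → i` of row `k`, this gives `c k i ≤ b k i / b k k`; by induction along the
DAG it also gives `b j k * b k i ≤ b j i * b k k`. Together these squeeze `b j i` onto the
maximum over `k ∈ de(j) ∩ pa(i)` whenever `j ∉ pa(i)`. Conversely, the weights
`c k i = b k i / b k k` and `c i i = b i i` satisfy the row equations exactly under the stated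
conditions.
-/

open scoped NNReal ENNReal Classical

namespace MaxLinearDAG

variable {d : ℕ}

/-- `p` is a directed path (with at least one edge) from `j` to `i` in the edge relation `E`. -/
def PathFrom (E : Fin d → Fin d → Prop) (j i : Fin d) (p : List (Fin d)) : Prop :=
  2 ≤ p.length ∧ p.head? = some j ∧ p.getLast? = some i ∧ List.Chain' E p

/-- The directed graph given by `E` is acyclic: no directed path from a node to itself. -/
def Acyclic (E : Fin d → Fin d → Prop) : Prop :=
  ∀ i, ¬ ∃ p, PathFrom E i i p

/-- `j` is an ancestor of `i`: there is a path from `j` to `i`. -/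
def anc (E : Fin d → Fin d → Prop) (j i : Fin d) : Prop :=
  ∃ p, PathFrom E j i p

/-- The weight of a path `p` starting at `j`: `c j j` times the product of the
edge weights along `p`. -/
noncomputable def pathWeight (c : Fin d → Fin d → ℝ≥0) (j : Fin d) (p : List (Fin d)) : ℝ≥0 :=
  c j j * ((p.zip p.tail).map fun q => c q.1 q.2).prod

/-- `b` is the max-linear coefficient matrix of the recursive ML model on `(E, c)`:
for `j ∈ an(i)`, `b j i` is the (attained) maximum of the path weights over all paths
from `j` to `i`; `b i i = c i i`; and `b j i = 0` for `j ∉ An(i)`. -/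
def IsMLMatrix (E : Fin d → Fin d → Prop) (c b : Fin d → Fin d → ℝ≥0) : Prop :=
  (∀ i, b i i = c i i) ∧
  (∀ j i, j ≠ i → ¬ anc E j i → b j i = 0) ∧
  (∀ j i p, PathFrom E j i p → pathWeight c j p ≤ b j i) ∧
  (∀ j i, anc E j i → ∃ p, PathFrom E j i p ∧ pathWeight c j p = b j i)

/-- `x` is the vector of recursive max-linear values on `(E, c)` for noise `z`:
`x i = max (max_{k ∈ pa(i)} c k i * x k) (c i i * z i)`, empty max being `0`. -/
def IsRecML (E : Fin d → Fin d → Prop) (c : Fin d → Fin d → ℝ≥0) (z x : Fin d → ℝ≥0) : Prop :=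
  ∀ i, x i = (Finset.univ.sup fun k => if E k i then c k i * x k else 0) ⊔ c i i * z i

/-- Max-times matrix product `F ⊙ G`. -/
noncomputable def mprod (F G : Fin d → Fin d → ℝ≥0) : Fin d → Fin d → ℝ≥0 :=
  fun i j => Finset.univ.sup fun k => F i k * G k j

/-- Max-times matrix power, `mpow A 0` being the identity matrix. -/
noncomputable def mpow (A : Fin d → Fin d → ℝ≥0) : ℕ → Fin d → Fin d → ℝ≥0
  | 0 => fun i j => if i = j then 1 else 0
  | n + 1 => mprod (mpow A n) A

/-- `p` is a max-weighted path from `j` to `i`. -/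
def MaxWeighted (E : Fin d → Fin d → Prop) (c b : Fin d → Fin d → ℝ≥0)
    (j i : Fin d) (p : List (Fin d)) : Prop :=
  PathFrom E j i p ∧ pathWeight c j p = b j i

/-- The lowest max-weighted ancestors of `i` in `U`: nodes `j ∈ An(i) ∩ U` such that no
max-weighted path from `j` to `i` passes through a node of `U \ {j}`. -/
def AnLow (E : Fin d → Fin d → Prop) (c b : Fin d → Fin d → ℝ≥0)
    (U : Set (Fin d)) (i : Fin d) : Set (Fin d) :=
  {j | (anc E j i ∨ j = i) ∧ j ∈ U ∧
    ∀ p, MaxWeighted E c b j i p → ¬ ∃ u ∈ U \ {j}, u ∈ p}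

/-- The highest max-weighted descendants of `i` in `U`: nodes `l ∈ De(i) ∩ U` such that no
max-weighted path from `i` to `l` passes through a node of `U \ {l}`. -/
def DeHigh (E : Fin d → Fin d → Prop) (c b : Fin d → Fin d → ℝ≥0)
    (U : Set (Fin d)) (i : Fin d) : Set (Fin d) :=
  {l | (anc E i l ∨ l = i) ∧ l ∈ U ∧
    ∀ p, MaxWeighted E c b i l p → ¬ ∃ u ∈ U \ {l}, u ∈ p}

section Graph

variable {E : Fin d → Fin d → Prop}

lemma anc_of_edge {k i : Fin d} (h : E k i) : anc E k i :=
  ⟨[k, i], by simp, rfl, rfl, List.isChain_pair.2 h⟩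

lemma PathFrom.append {j k i : Fin d} {p q : List (Fin d)}
    (hp : PathFrom E j k p) (hq : PathFrom E k i q) : PathFrom E j i (p ++ q.tail) := by
  obtain ⟨hl, hh, hg, hc⟩ := hp
  match q, hq with
  | k' :: m :: t, ⟨_, hh', hg', hc'⟩ =>
    obtain rfl : k' = k := by simpa using hh'
    have hp : p ≠ [] := by rintro rfl; simp at hl
    refine ⟨by simp; omega, by simp [List.head?_append, hh], ?_, hc.append hc'.tail ?_⟩
    · simpa [List.getLast?_append, List.getLast?_cons_cons] using hg'
    · simpa [hg] using (List.isChain_cons_cons.1 hc').1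

lemma anc_trans {j k i : Fin d} (h₁ : anc E j k) (h₂ : anc E k i) : anc E j i :=
  let ⟨_, hp⟩ := h₁; let ⟨_, hq⟩ := h₂; ⟨_, hp.append hq⟩

lemma ne_of_anc (hE : Acyclic E) {j i : Fin d} (h : anc E j i) : j ≠ i := by
  rintro rfl; exact hE j h

lemma ne_of_edge (hE : Acyclic E) {k i : Fin d} (h : E k i) : k ≠ i :=
  ne_of_anc hE (anc_of_edge h)

lemma wellFounded_anc (hE : Acyclic E) : WellFounded (anc E) :=
  haveI : IsTrans (Fin d) (anc E) := ⟨fun _ _ _ => anc_trans⟩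
  haveI : Std.Irrefl (anc E) := ⟨hE⟩
  Finite.wellFounded_of_trans_of_irrefl _

end Graph

lemma sup_mul_single (f : Fin d → ℝ≥0) (j : Fin d) :
    (Finset.univ.sup fun i => f i * (Pi.single j 1 : Fin d → ℝ≥0) i) = f j := by
  refine le_antisymm (Finset.sup_le fun i _ => ?_) ?_
  · rcases eq_or_ne i j with rfl | h <;> simp [*]
  · simpa using
      Finset.le_sup (f := fun i => f i * (Pi.single j 1 : Fin d → ℝ≥0) i) (Finset.mem_univ j)

theorem isRecML_sup_iff (E : Fin d → Fin d → Prop) (c b : Fin d → Fin d → ℝ≥0) :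
    (∀ z, IsRecML E c z fun i => Finset.univ.sup fun j => b j i * z j) ↔
      ∀ j, IsRecML E c (Pi.single j 1) (b j) := by
  refine ⟨fun h j => ?_, fun h z i => ?_⟩
  · simpa only [sup_mul_single] using h (Pi.single j 1)
  · calc (Finset.univ.sup fun j => b j i * z j)
        = Finset.univ.sup fun j => (Finset.univ.sup fun k =>
            if E k i then c k i * (b j k * z j) else 0) ⊔
              c i i * z j * (Pi.single i 1 : Fin d → ℝ≥0) j := by
          refine Finset.sup_congr rfl fun j _ => ?_
          rw [h j i, NNReal.sup_mul, NNReal.finset_sup_mul, Pi.single_comm]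
          simp only [ite_mul, zero_mul, mul_assoc, mul_comm (Pi.single i 1 j)]
      _ = (Finset.univ.sup fun j => Finset.univ.sup fun k =>
            if E k i then c k i * (b j k * z j) else 0) ⊔
              Finset.univ.sup fun j => c i i * z j * (Pi.single i 1 : Fin d → ℝ≥0) j :=
          Finset.sup_sup
      _ = _ := by
          rw [Finset.sup_comm, sup_mul_single]
          congr 1
          refine Finset.sup_congr rfl fun k _ => ?_
          split_ifs <;> simp [NNReal.mul_finset_sup]

section RecML

variable {E : Fin d → Fin d → Prop} {c : Fin d → Fin d → ℝ≥0} {z x : Fin d → ℝ≥0}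

lemma IsRecML.mul_le_of_edge (hx : IsRecML E c z x) {k i : Fin d} (h : E k i) :
    c k i * x k ≤ x i := by
  rw [hx i]
  exact le_sup_of_le_left <| Finset.le_sup_of_le (Finset.mem_univ k) (by simp [h])

lemma IsRecML.eq_sup_parents (hx : IsRecML E c z x) {i : Fin d} (hz : z i = 0) :
    x i = Finset.univ.sup fun k => if E k i then c k i * x k else 0 := by
  rw [hx i, hz, mul_zero, sup_eq_left.2 zero_le]

theorem mul_le_mul_diag (hE : Acyclic E) {b : Fin d → Fin d → ℝ≥0}
    (hrow : ∀ j, IsRecML E c (Pi.single j 1) (b j)) (i j k : Fin d) :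
    b j k * b k i ≤ b j i * b k k := by
  induction i using (wellFounded_anc hE).induction generalizing j k with
  | _ i IH =>
  rcases eq_or_ne k i with rfl | hki
  · rw [mul_comm]
  rw [(hrow k).eq_sup_parents (Pi.single_eq_of_ne hki.symm 1), NNReal.mul_finset_sup]
  refine Finset.sup_le fun m _ => ?_
  split_ifs with hmi
  · calc b j k * (c m i * b k m) = c m i * (b j k * b k m) := by ring
      _ ≤ c m i * (b j m * b k k) := by gcongr c m i * ?_; exact IH m (anc_of_edge hmi) j k
      _ = c m i * b j m * b k k := by ring
      _ ≤ b j i * b k k := by gcongr ?_ * b k k; exact (hrow j).mul_le_of_edge hmi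
  · simp

end RecML

noncomputable def maxViaParent (E : Fin d → Fin d → Prop) (b : Fin d → Fin d → ℝ≥0)
    (j i : Fin d) : ℝ≥0 :=
  Finset.univ.sup fun k => if anc E j k ∧ E k i then b j k * b k i / b k k else 0

section Coefficients

variable {E : Fin d → Fin d → Prop} {b : Fin d → Fin d → ℝ≥0}

lemma maxViaParent_eq_zero {j i : Fin d} (h : ¬ anc E j i) : maxViaParent E b j i = 0 :=
  le_antisymm (Finset.sup_le fun k _ => by
    rw [if_neg fun ⟨hjk, hki⟩ => h (anc_trans hjk (anc_of_edge hki))]) zero_le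

lemma maxViaParent_le (hE : Acyclic E) {c : Fin d → Fin d → ℝ≥0}
    (hrow : ∀ j, IsRecML E c (Pi.single j 1) (b j)) (j i : Fin d) :
    maxViaParent E b j i ≤ b j i :=
  Finset.sup_le fun k _ => by
    split_ifs
    · exact div_le_of_le_mul₀ zero_le zero_le (mul_le_mul_diag hE hrow i j k)
    · exact zero_le

variable (hsgn : ∀ j i, 0 < b j i ↔ (anc E j i ∨ j = i))
include hsgn

lemma diag_pos (k : Fin d) : 0 < b k k := (hsgn k k).2 (Or.inr rfl)

lemma anc_of_ne_zero {j k : Fin d} (h : b j k ≠ 0) (hne : j ≠ k) : anc E j k :=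
  ((hsgn j k).1 (pos_iff_ne_zero.2 h)).resolve_right hne

lemma eq_zero_of_not_anc {j i : Fin d} (h : ¬ anc E j i) (hne : j ≠ i) : b j i = 0 := by
  by_contra h'
  exact h (anc_of_ne_zero hsgn h' hne)

lemma sup_parents_eq (j i : Fin d) :
    (Finset.univ.sup fun k => if E k i then b j k * b k i / b k k else 0) =
      (if E j i then b j i else 0) ⊔ maxViaParent E b j i := by
  have hjj := (diag_pos hsgn j).ne'
  refine le_antisymm (Finset.sup_le fun k _ => ?_) (sup_le ?_ ?_)
  · by_cases hki : E k i
    · rw [if_pos hki]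
      rcases eq_or_ne j k with rfl | hne
      · rw [mul_div_cancel_left₀ _ hjj]
        exact le_sup_of_le_left (by simp [hki])
      rcases eq_or_ne (b j k) 0 with h0 | h0
      · simp [h0]
      exact le_sup_of_le_right <| Finset.le_sup_of_le (Finset.mem_univ k)
        (by simp [anc_of_ne_zero hsgn h0 hne, hki])
    · simp [hki]
  · split_ifs with hji
    · exact Finset.le_sup_of_le (Finset.mem_univ j) (by simp [hji, mul_div_cancel_left₀ _ hjj])
    · exact bot_le
  · exact Finset.sup_mono_fun fun k _ => by split_ifs <;> simp_all

theorem eq_maxViaParent_of_isRecML (hE : Acyclic E) {c : Fin d → Fin d → ℝ≥0}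
    (hrow : ∀ j, IsRecML E c (Pi.single j 1) (b j)) {j i : Fin d}
    (hji : anc E j i) (hnE : ¬ E j i) : b j i = maxViaParent E b j i := by
  refine le_antisymm ?_ (maxViaParent_le hE hrow j i)
  have hc : ∀ k, E k i → c k i ≤ b k i / b k k := fun k hki =>
    (le_div_iff₀ (diag_pos hsgn k)).2 ((hrow k).mul_le_of_edge hki)
  calc b j i = Finset.univ.sup fun k => if E k i then c k i * b j k else 0 :=
        (hrow j).eq_sup_parents (Pi.single_eq_of_ne (ne_of_anc hE hji).symm 1)
    _ ≤ Finset.univ.sup fun k => if E k i then b j k * b k i / b k k else 0 := by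
        refine Finset.sup_mono_fun fun k _ => ?_
        split_ifs with hki
        · rw [mul_comm, mul_div_assoc]
          exact mul_le_mul_right (hc k hki) _
        · exact le_rfl
    _ = maxViaParent E b j i := by
        rw [sup_parents_eq hsgn, if_neg hnE, sup_eq_right.2 zero_le]

theorem isRecML_of_maxViaParent (hE : Acyclic E)
    (H : ∀ i, (∀ j, anc E j i → ¬ E j i → b j i = maxViaParent E b j i) ∧
      (∀ j, E j i → maxViaParent E b j i ≤ b j i)) (j : Fin d) :
    IsRecML E (fun k i => if k = i then b k k else b k i / b k k) (Pi.single j 1) (b j) := by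
  intro i
  have hpar : (Finset.univ.sup fun k =>
      if E k i then (if k = i then b k k else b k i / b k k) * b j k else 0) =
        (if E j i then b j i else 0) ⊔ maxViaParent E b j i := by
    rw [← sup_parents_eq hsgn]
    refine Finset.sup_congr rfl fun k _ => ?_
    by_cases hki : E k i
    · simp only [if_pos hki, if_neg (ne_of_edge hE hki)]
      rw [div_mul_eq_mul_div, mul_comm (b k i)]
    · simp only [if_neg hki]
  rw [hpar]
  rcases eq_or_ne j i with rfl | hne
  · have hjj : ¬ E j j := fun h => ne_of_edge hE h rfl
    simp [hjj, maxViaParent_eq_zero (hE j)]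
  · rw [Pi.single_eq_of_ne hne.symm, mul_zero, sup_eq_left.2 zero_le]
    by_cases hji : anc E j i
    · by_cases hEji : E j i
      · rw [if_pos hEji, sup_eq_left.2 ((H i).2 j hEji)]
      · rw [if_neg hEji, sup_eq_right.2 zero_le, (H i).1 j hji hEji]
    · rw [eq_zero_of_not_anc hsgn hji hne, if_neg fun h => hji (anc_of_edge h),
        maxViaParent_eq_zero hji, sup_idem]

end Coefficients

theorem stmt8_general {d : ℕ} (E : Fin d → Fin d → Prop) (hE : Acyclic E)
    (b : Fin d → Fin d → ℝ≥0)
    (hsgn : ∀ j i, 0 < b j i ↔ (anc E j i ∨ j = i)) :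
    (∃ c' : Fin d → Fin d → ℝ≥0, (∀ k i, E k i → 0 < c' k i) ∧ (∀ i, 0 < c' i i) ∧
        ∀ z : Fin d → ℝ≥0,
          IsRecML E c' z fun i => Finset.univ.sup fun j => b j i * z j) ↔
    ∀ i : Fin d,
      (∀ j, anc E j i → ¬ E j i →
        b j i = Finset.univ.sup fun k =>
          if anc E j k ∧ E k i then b j k * b k i / b k k else 0) ∧
      (∀ j, E j i →
        (Finset.univ.sup fun k =>
          if anc E j k ∧ E k i then b j k * b k i / b k k else 0) ≤ b j i) := by
  simp only [isRecML_sup_iff]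
  constructor
  · rintro ⟨c, -, -, hrow⟩ i
    exact ⟨fun j hji hnE => eq_maxViaParent_of_isRecML hsgn hE hrow hji hnE,
      fun j _ => maxViaParent_le hE hrow j i⟩
  · intro H
    refine ⟨_, fun k i hki => ?_, fun i => ?_, isRecML_of_maxViaParent hsgn hE H⟩
    · rw [if_neg (ne_of_edge hE hki)]
      exact div_pos ((hsgn k i).2 (Or.inl (anc_of_edge hki))) (diag_pos hsgn k)
    · simpa using diag_pos hsgn i

/-- Let `𝒟` be a DAG with reachability matrix `sgn(B)`. Then `B` is the ML
coefficient matrix of a recursive ML model on `𝒟` (there are positive weights `c'` such that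
`max_j b j i * z j` solves the recursive equations on `𝒟`) iff for every `i ∈ V`:
`b j i = max_{k ∈ de(j) ∩ pa(i)} b j k * b k i / b k k` for all `j ∈ an(i) ∖ pa(i)`, and
`b j i ≥ max_{k ∈ de(j) ∩ pa(i)} b j k * b k i / b k k` for all `j ∈ pa(i)`
(empty max being `0`). -/
theorem stmt8 {d : ℕ} (hd : 1 ≤ d) (E : Fin d → Fin d → Prop) (hE : Acyclic E)
    (b : Fin d → Fin d → ℝ≥0)
    (hsgn : ∀ j i, 0 < b j i ↔ (anc E j i ∨ j = i)) :
    (∃ c' : Fin d → Fin d → ℝ≥0, (∀ k i, E k i → 0 < c' k i) ∧ (∀ i, 0 < c' i i) ∧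
        ∀ z : Fin d → ℝ≥0,
          IsRecML E c' z fun i => Finset.univ.sup fun j => b j i * z j) ↔
    ∀ i : Fin d,
      (∀ j, anc E j i → ¬ E j i →
        b j i = Finset.univ.sup fun k =>
          if anc E j k ∧ E k i then b j k * b k i / b k k else 0) ∧
      (∀ j, E j i →
        (Finset.univ.sup fun k =>
          if anc E j k ∧ E k i then b j k * b k i / b k k else 0) ≤ b j i) :=
  stmt8_general E hE b hsgn

end MaxLinearDAG
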